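/- arXiv:2105.02074 — 2 statements merged into one kernel-verified Lean document; each statement's English description precedes it below -/
import Mathlib

section
/- Let {E_i}_{i=1}^n be a POVM on ℂ^d. Then Σ_{l,m=1}^n √(tr(E_l) · tr(E_m)) · tr(√E_l √E_m) ≥ d. (Consequently, the Rayleigh quotient of the Gram matrix S with entries S_{lm} = tr(√E_l √E_m) at the vector with entries √(tr E_l)/√d is at least 1, so the largest eigenvalue of S is at least 1.) -/
/-!
With `tₗ = tr Eₗ` and `A = ∑ₗ √tₗ √Eₗ`, the left-hand side is `tr (A²)`. Since `tr √E ≥ √(tr E)`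
(the square root of a sum of nonnegative eigenvalues is at most the sum of their square roots),
`tr A ≥ ∑ₗ tₗ = tr I = d`, and Cauchy–Schwarz on the diagonal of the Hermitian matrix `A` gives
`(tr A)² ≤ d · tr (A²)`.
-/

open Matrix BigOperators
open scoped ComplexOrder

noncomputable def Matrix.PosSemidef.sqrt {n 𝕜 : Type*} [Fintype n] [DecidableEq n] [RCLike 𝕜]
    {A : Matrix n n 𝕜} (hA : A.PosSemidef) : Matrix n n 𝕜 :=
  hA.1.eigenvectorUnitary.1 * diagonal ((↑) ∘ Real.sqrt ∘ hA.1.eigenvalues) *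
    (star hA.1.eigenvectorUnitary : Matrix n n 𝕜)

namespace Matrix

variable {n 𝕜 : Type*} [Fintype n] [RCLike 𝕜]

section Sqrt

open scoped MatrixOrder

variable [DecidableEq n] {A : Matrix n n 𝕜}

lemma PosSemidef.sqrt_eq_cfcSqrt (hA : A.PosSemidef) : hA.sqrt = CFC.sqrt A := by
  rw [CFC.sqrt_eq_real_sqrt A hA.nonneg, cfcₙ_eq_cfc, hA.1.cfc_eq, IsHermitian.cfc,
    Unitary.conjStarAlgAut_apply]
  rfl

lemma PosSemidef.posSemidef_sqrt (hA : A.PosSemidef) : hA.sqrt.PosSemidef := by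
  rw [hA.sqrt_eq_cfcSqrt, ← nonneg_iff_posSemidef]
  exact CFC.sqrt_nonneg A

lemma PosSemidef.trace_sqrt (hA : A.PosSemidef) :
    hA.sqrt.trace = ∑ i, (√(hA.1.eigenvalues i) : 𝕜) := by
  rw [PosSemidef.sqrt, trace_mul_cycle]
  simp [trace_diagonal]

lemma PosSemidef.sqrt_re_trace_le_re_trace_sqrt (hA : A.PosSemidef) :
    √(RCLike.re A.trace) ≤ RCLike.re hA.sqrt.trace := by
  have hev := hA.eigenvalues_nonneg
  rw [hA.trace_sqrt, hA.1.trace_eq_sum_eigenvalues]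
  simp only [map_sum, RCLike.ofReal_re]
  rw [Real.sqrt_le_left (Finset.sum_nonneg fun i _ ↦ Real.sqrt_nonneg _)]
  calc ∑ i, hA.1.eigenvalues i = ∑ i, √(hA.1.eigenvalues i) ^ 2 := by
        simp only [Real.sq_sqrt (hev _)]
    _ ≤ _ := Finset.sum_sq_le_sq_sum_of_nonneg fun i _ ↦ Real.sqrt_nonneg _

end Sqrt

lemma re_conjTranspose_mul_self_apply_self (A : Matrix n n 𝕜) (i : n) :
    RCLike.re ((Aᴴ * A) i i) = ∑ j, ‖A j i‖ ^ 2 := by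
  simp only [mul_apply, conjTranspose_apply, RCLike.star_def, RCLike.conj_mul, map_sum]
  norm_cast

lemma sq_re_trace_le_card_mul_re_trace_conjTranspose_mul_self (A : Matrix n n 𝕜) :
    RCLike.re A.trace ^ 2 ≤ Fintype.card n * RCLike.re (Aᴴ * A).trace := by
  have hdiag (i : n) : RCLike.re (A i i) ^ 2 ≤ RCLike.re ((Aᴴ * A) i i) := by
    rw [re_conjTranspose_mul_self_apply_self]
    calc RCLike.re (A i i) ^ 2 ≤ ‖A i i‖ ^ 2 :=
          sq_le_sq' (abs_le.1 (RCLike.abs_re_le_norm _)).1 (RCLike.re_le_norm _)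
      _ ≤ ∑ j, ‖A j i‖ ^ 2 :=
          Finset.single_le_sum (f := fun j ↦ ‖A j i‖ ^ 2) (fun j _ ↦ by positivity)
            (Finset.mem_univ i)
  calc RCLike.re A.trace ^ 2 = (∑ i, RCLike.re (A i i)) ^ 2 := by simp [trace]
    _ ≤ Fintype.card n * ∑ i, RCLike.re (A i i) ^ 2 := sq_sum_le_card_mul_sum_sq
    _ ≤ Fintype.card n * RCLike.re (Aᴴ * A).trace := by
        gcongr
        simpa [trace] using Finset.sum_le_sum fun i _ ↦ hdiag i

end Matrix

/-- For a POVM `{E_i}` on `ℂ^d`,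
`Σ_{l,m} √(tr(E_l)·tr(E_m)) · tr(√E_l √E_m) ≥ d`. -/
theorem gram_rayleigh_quotient_ge
    (d n : ℕ) (E : Fin n → Matrix (Fin d) (Fin d) ℂ)
    (hE : ∀ i, (E i).PosSemidef)
    (hsum : ∑ i, E i = 1) :
    (d : ℝ) ≤ ∑ l, ∑ m, Real.sqrt ((E l).trace.re * (E m).trace.re) *
      ((hE l).sqrt * (hE m).sqrt).trace.re := by
  set t : Fin n → ℝ := fun l ↦ (E l).trace.re
  have ht (l : Fin n) : 0 ≤ t l := (Complex.nonneg_iff.1 (hE l).trace_nonneg).1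
  have hsum_t : ∑ l, t l = d := by
    simp only [t, ← Complex.re_sum, ← trace_sum, hsum, trace_one, Fintype.card_fin,
      Complex.natCast_re]
  set A := ∑ l, √(t l) • (hE l).sqrt
  have hA_herm : Aᴴ = A := by
    simp only [A, conjTranspose_sum, conjTranspose_smul, star_trivial,
      (hE _).posSemidef_sqrt.isHermitian.eq]
  have hA_mul_self : (A * A).trace.re =
      ∑ l, ∑ m, √(t l * t m) * ((hE l).sqrt * (hE m).sqrt).trace.re := by
    simp only [A, Finset.sum_mul_sum, smul_mul_smul_comm, trace_sum, trace_smul, Complex.re_sum,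
      Complex.smul_re, smul_eq_mul, Real.sqrt_mul (ht _)]
  have hd_le_trace : (d : ℝ) ≤ A.trace.re :=
    calc (d : ℝ) = ∑ l, √(t l) * √(t l) := by simp only [Real.mul_self_sqrt (ht _), hsum_t]
      _ ≤ ∑ l, √(t l) * ((hE l).sqrt).trace.re := by
        gcongr with l
        exact (hE l).sqrt_re_trace_le_re_trace_sqrt
      _ = A.trace.re := by
        simp only [A, trace_sum, trace_smul, Complex.re_sum, Complex.smul_re, smul_eq_mul]
  have hCS := A.sq_re_trace_le_card_mul_re_trace_conjTranspose_mul_self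
  have hA_sq_nonneg := (Complex.nonneg_iff.1 (posSemidef_conjTranspose_mul_self A).trace_nonneg).1
  rw [hA_herm] at hCS hA_sq_nonneg
  simp only [RCLike.re_to_complex, Fintype.card_fin] at hCS
  rw [← hA_mul_self]
  nlinarith
end

section
/- Let d ≥ 2 and let {E_i}_{i=1}^{d²} be a rank-one minimal informationally complete POVM on ℂ^d, i.e., a POVM with n = d² effects each of which is nonzero and has matrix rank one. Then its disturbance equals its orthogonality, D = O where O = Σ_{i,j} (tr(√E_i √E_j))² − 2d + d², and moreover D ≥ d²(d−1)/(d+1). -/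
open Matrix BigOperators
open scoped ComplexOrder

open scoped MatrixOrder in
lemma Matrix.PosSemidef.sqrt_eq_CFC_sqrt {d : ℕ} {A : Matrix (Fin d) (Fin d) ℂ}
    (hA : A.PosSemidef) : hA.sqrt = CFC.sqrt A := by
  have hA' : 0 ≤ A := hA.nonneg
  rw [CFC.sqrt_eq_cfc, cfc_nnreal_eq_real _ A, hA.1.cfc_eq]
  simp only [IsHermitian.cfc, Matrix.PosSemidef.sqrt, Unitary.conjStarAlgAut_apply]
  congr 3
  funext i
  simp [max_eq_left (hA.eigenvalues_nonneg i)]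

open scoped MatrixOrder in
lemma Matrix.PosSemidef.posSemidef_sqrt_s13 {d : ℕ} {A : Matrix (Fin d) (Fin d) ℂ}
    (hA : A.PosSemidef) : hA.sqrt.PosSemidef := by
  have hA' : 0 ≤ A := hA.nonneg
  rw [hA.sqrt_eq_CFC_sqrt]
  exact (CFC.sqrt_nonneg A).posSemidef

open scoped MatrixOrder in
lemma Matrix.PosSemidef.sqrt_mul_self {d : ℕ} {A : Matrix (Fin d) (Fin d) ℂ}
    (hA : A.PosSemidef) : hA.sqrt * hA.sqrt = A := by
  have hA' : 0 ≤ A := hA.nonneg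
  rw [hA.sqrt_eq_CFC_sqrt]
  exact CFC.sqrt_mul_sqrt_self A

open scoped MatrixOrder in
lemma Matrix.PosSemidef.eq_sqrt_of_sq_eq {d : ℕ} {A B : Matrix (Fin d) (Fin d) ℂ}
    (hB : B.PosSemidef) (hA : A.PosSemidef) (h : B ^ 2 = A) : B = hA.sqrt := by
  rw [hA.sqrt_eq_CFC_sqrt]
  exact (CFC.sqrt_unique (by rw [← sq]; exact h) hB.nonneg).symm

lemma sum_sum_factor {α : Type*} [Fintype α] (c : ℂ) (x y : α → ℂ) :
    ∑ i, ∑ j, c * (x i * y j) = c * ((∑ i, x i) * (∑ j, y j)) := by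
  symm
  rw [Finset.sum_mul, Finset.mul_sum]
  refine Finset.sum_congr rfl fun i _ => ?_
  rw [Finset.mul_sum, Finset.mul_sum]

lemma sum4_factor {α : Type*} [Fintype α] (c : ℂ) (u v : α → α → ℂ) :
    ∑ i, ∑ j, ∑ k, ∑ m, c * (u i k * v j m)
      = c * ((∑ i, ∑ k, u i k) * (∑ j, ∑ m, v j m)) := by
  have step1 : ∀ i j, ∑ k, ∑ m, c * (u i k * v j m)
      = c * ((∑ k, u i k) * (∑ m, v j m)) := fun i j => sum_sum_factor c (u i) (v j)
  calc ∑ i, ∑ j, ∑ k, ∑ m, c * (u i k * v j m)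
      = ∑ i, ∑ j, c * ((∑ k, u i k) * (∑ m, v j m)) :=
        Finset.sum_congr rfl fun i _ => Finset.sum_congr rfl fun j _ => step1 i j
    _ = c * ((∑ i, ∑ k, u i k) * (∑ j, ∑ m, v j m)) :=
        sum_sum_factor c (fun i => ∑ k, u i k) (fun j => ∑ m, v j m)

theorem rankOneAux (d : ℕ) (A : Matrix (Fin d) (Fin d) ℂ) (hA : A.PosSemidef) (hr : A.rank = 1) :
    ∃ a : ℝ, 0 < a ∧ A.trace = (a : ℂ) ∧ A * A = (a : ℂ) • A := by
  have h := hA.1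
  have hcard : Fintype.card {i // h.eigenvalues i ≠ 0} = 1 := by
    rw [← h.rank_eq_card_non_zero_eigs, hr]
  obtain ⟨⟨k, hk⟩, huniq⟩ := Fintype.card_eq_one_iff.mp hcard
  have hzero : ∀ i, i ≠ k → h.eigenvalues i = 0 := by
    intro i hi
    by_contra hne
    exact hi (congrArg Subtype.val (huniq ⟨i, hne⟩))
  set U : Matrix (Fin d) (Fin d) ℂ := (h.eigenvectorUnitary : Matrix (Fin d) (Fin d) ℂ) with hU
  have hUU : star U * U = 1 := Matrix.mem_unitaryGroup_iff'.mp h.eigenvectorUnitary.2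
  set Dg : Matrix (Fin d) (Fin d) ℂ := Matrix.diagonal (RCLike.ofReal ∘ h.eigenvalues) with hDg
  have hspec : A = U * Dg * star U := h.spectral_theorem
  have hDD : Dg * Dg = ((h.eigenvalues k : ℂ)) • Dg := by
    rw [hDg, Matrix.diagonal_mul_diagonal]
    ext i j
    by_cases hij : i = j
    · subst hij
      rcases eq_or_ne i k with rfl | hi
      · simp [Function.comp]
      · simp [Function.comp, hzero i hi]
    · simp [Matrix.diagonal_apply_ne _ hij, Matrix.smul_apply]
  refine ⟨h.eigenvalues k, (hA.eigenvalues_nonneg k).lt_of_ne' hk, ?_, ?_⟩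
  · calc A.trace = (U * Dg * star U).trace := by rw [← hspec]
      _ = (star U * U * Dg).trace := by
          rw [Matrix.trace_mul_cycle, Matrix.mul_assoc]
      _ = Dg.trace := by rw [hUU, Matrix.one_mul]
      _ = (h.eigenvalues k : ℂ) := by
          rw [hDg, Matrix.trace_diagonal]
          rw [Finset.sum_eq_single k]
          · rfl
          · intro i _ hi; simp [hzero i hi]
          · simp
  · calc A * A = (U * Dg * star U) * (U * Dg * star U) := by rw [← hspec]
      _ = U * Dg * (star U * U) * Dg * star U := by
          simp only [Matrix.mul_assoc]
      _ = U * (Dg * Dg) * star U := by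
          rw [hUU]; simp only [Matrix.mul_one, Matrix.mul_assoc]
      _ = (h.eigenvalues k : ℂ) • (U * Dg * star U) := by
          rw [hDD]
          simp only [Matrix.mul_smul, Matrix.smul_mul, Matrix.mul_assoc]
      _ = (h.eigenvalues k : ℂ) • A := by rw [← hspec]

theorem smulPSD (d : ℕ) (A : Matrix (Fin d) (Fin d) ℂ) (hA : A.PosSemidef)
    (c : ℝ) (hc : 0 ≤ c) : ((c : ℂ) • A).PosSemidef := by
  constructor
  · unfold Matrix.IsHermitian
    rw [Matrix.conjTranspose_smul, hA.1.eq]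
    norm_num
  · intro x
    exact (hA.smul (show (0:ℂ) ≤ (c:ℂ) by exact_mod_cast hc)).2 x

theorem sqrtEq (d : ℕ) (A : Matrix (Fin d) (Fin d) ℂ) (hA : A.PosSemidef)
    (a : ℝ) (ha : 0 < a) (hsq : A * A = (a : ℂ) • A) :
    hA.sqrt = (((Real.sqrt a)⁻¹ : ℝ) : ℂ) • A := by
  have hpsd := smulPSD d A hA (Real.sqrt a)⁻¹ (by positivity)
  refine (Matrix.PosSemidef.eq_sqrt_of_sq_eq hpsd hA ?_).symm
  rw [pow_two, Matrix.smul_mul, Matrix.mul_smul, smul_smul, hsq, smul_smul]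
  rw [← Complex.ofReal_mul, ← Complex.ofReal_mul]
  have : (Real.sqrt a)⁻¹ * (Real.sqrt a)⁻¹ * a = 1 := by
    rw [← mul_inv, Real.mul_self_sqrt ha.le]
    field_simp
  rw [this, Complex.ofReal_one, one_smul]

theorem tracePSD (d : ℕ) (A B : Matrix (Fin d) (Fin d) ℂ) (hA : A.PosSemidef) (hB : B.PosSemidef) :
    ∃ r : ℝ, 0 ≤ r ∧ (A * B).trace = (r : ℂ) := by
  set C := hA.sqrt * hB.sqrt with hC
  have hCH : Cᴴ = hB.sqrt * hA.sqrt := by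
    rw [hC, Matrix.conjTranspose_mul, hA.posSemidef_sqrt_s13.1.eq, hB.posSemidef_sqrt_s13.1.eq]
  have h1 : (A * B).trace = (C * Cᴴ).trace := by
    conv_lhs => rw [← hA.sqrt_mul_self, ← hB.sqrt_mul_self]
    rw [hCH, hC]
    rw [Matrix.mul_assoc, Matrix.mul_assoc, Matrix.trace_mul_comm]
    simp only [Matrix.mul_assoc]
  refine ⟨∑ i, ∑ j, Complex.normSq (C i j),
    Finset.sum_nonneg fun i _ => Finset.sum_nonneg fun j _ => Complex.normSq_nonneg _, ?_⟩
  rw [h1, Matrix.trace]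
  push_cast
  refine Finset.sum_congr rfl fun i _ => ?_
  rw [Matrix.diag_apply, Matrix.mul_apply]
  refine Finset.sum_congr rfl fun j _ => ?_
  rw [Matrix.conjTranspose_apply, RCLike.star_def, Complex.mul_conj]

theorem keyIneq (d : ℕ) (hd : 1 ≤ d) (n : ℕ) (E : Fin n → Matrix (Fin d) (Fin d) ℂ)
    (herm : ∀ t, (E t).IsHermitian)
    (a : Fin n → ℝ) (ha : ∀ t, 0 < a t)
    (htr : ∀ t, (E t).trace = (a t : ℂ))
    (hsq : ∀ t, E t * E t = (a t : ℂ) • E t)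
    (hsuma : ∑ t, a t = d)
    (r : Fin n → Fin n → ℝ) (hr : ∀ t s, (E t * E s).trace = (r t s : ℂ)) :
    2 * d / (d + 1) ≤ ∑ t, ∑ s, (r t s) ^ 2 / (a t * a s) := by
  classical
  set F : (Fin d × Fin d) × (Fin d × Fin d) → ℂ :=
    fun x => ∑ t, ((a t : ℂ))⁻¹ * (E t x.1.1 x.2.1 * E t x.1.2 x.2.2) with hF
  set G : (Fin d × Fin d) × (Fin d × Fin d) → ℝ :=
    fun x => ((if x.2 = x.1 then 1 else 0) + (if x.2 = x.1.swap then 1 else 0)) / 2 with hG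
  have hane : ∀ t, (a t : ℂ) ≠ 0 := fun t => by exact_mod_cast (ha t).ne'
  have htr' : ∀ t, ∑ i, E t i i = (a t : ℂ) := fun t => by rw [← htr t]; rfl
  have htr2 : ∀ t s, ∑ i, ∑ k, E t i k * E s k i = (r t s : ℂ) := fun t s => by
    rw [← hr t s]; simp [Matrix.trace, Matrix.diag, Matrix.mul_apply]
  have hconj : ∀ t i k, (starRingEnd ℂ) (E t i k) = E t k i := fun t i k => by
    rw [← Complex.star_def, ← Matrix.conjTranspose_apply, (herm t).eq]
  have hrtt : ∀ t, (r t t : ℂ) = (a t : ℂ) * (a t : ℂ) := fun t => by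
    rw [← hr t t, hsq t, Matrix.trace_smul, htr t, smul_eq_mul]
  have hGnn : ∀ x, 0 ≤ G x := by
    intro x; rw [hG]; positivity
  -- diagonal sums of F
  have h1 : ∑ p : Fin d × Fin d, F (p, p) = (d : ℂ) := by
    rw [hF]; simp only []
    rw [Finset.sum_comm]
    have key : ∀ t, ∑ p : Fin d × Fin d, ((a t : ℂ))⁻¹ * (E t p.1 p.1 * E t p.2 p.2)
        = (a t : ℂ) := by
      intro t
      rw [Fintype.sum_prod_type]
      simp only []
      rw [sum_sum_factor, htr' t]
      field_simp
    rw [Fintype.sum_congr _ _ key, ← Complex.ofReal_sum, hsuma, Complex.ofReal_natCast]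
  have h2 : ∑ p : Fin d × Fin d, F (p, p.swap) = (d : ℂ) := by
    rw [hF]; simp only []
    rw [Finset.sum_comm]
    have key : ∀ t, ∑ p : Fin d × Fin d, ((a t : ℂ))⁻¹ * (E t p.1 p.2 * E t p.2 p.1)
        = (a t : ℂ) := by
      intro t
      rw [Fintype.sum_prod_type]
      simp only []
      have inner : ∀ i : Fin d, ∑ j, ((a t : ℂ))⁻¹ * (E t i j * E t j i)
          = ((a t : ℂ))⁻¹ * ∑ j, E t i j * E t j i := fun i => (Finset.mul_sum _ _ _).symm
      rw [Fintype.sum_congr _ _ inner, ← Finset.mul_sum, htr2 t t, hrtt t]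
      field_simp
    simp only [Prod.fst_swap, Prod.snd_swap]
    rw [Fintype.sum_congr _ _ key, ← Complex.ofReal_sum, hsuma, Complex.ofReal_natCast]
  -- Claim A
  have claimA : ∑ x : (Fin d × Fin d) × (Fin d × Fin d), F x * (G x : ℂ) = (d : ℂ) := by
    rw [Fintype.sum_prod_type]
    have step : ∀ p : Fin d × Fin d, ∑ q : Fin d × Fin d, F (p, q) * (G (p, q) : ℂ)
        = (F (p, p) + F (p, p.swap)) / 2 := by
      intro p
      rw [hG]
      simp only [apply_ite Complex.ofReal, Complex.ofReal_one, Complex.ofReal_zero,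
        Complex.ofReal_div, Complex.ofReal_add, Complex.ofReal_ofNat]
      have expand : ∀ q : Fin d × Fin d, F (p, q) *
          (((if q = p then (1:ℂ) else 0) + (if q = p.swap then (1:ℂ) else 0)) / 2)
          = ((if q = p then F (p, q) else 0) + (if q = p.swap then F (p, q) else 0)) / 2 := by
        intro q
        simp only [← mul_div_assoc, mul_add, mul_ite, mul_one, mul_zero]
      rw [Fintype.sum_congr _ _ expand]
      rw [← Finset.sum_div, Finset.sum_add_distrib, Finset.sum_ite_eq', Finset.sum_ite_eq']
      simp
    rw [Fintype.sum_congr _ _ step, ← Finset.sum_div, Finset.sum_add_distrib, h1, h2]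
    ring
  -- Claim B
  have claimB : ∑ x : (Fin d × Fin d) × (Fin d × Fin d), (Complex.normSq (F x) : ℝ)
      = ∑ t, ∑ s, (r t s) ^ 2 / (a t * a s) := by
    have complexver : ∑ x : (Fin d × Fin d) × (Fin d × Fin d), F x * (starRingEnd ℂ) (F x)
        = ((∑ t, ∑ s, (r t s) ^ 2 / (a t * a s) : ℝ) : ℂ) := by
      have expand : ∀ x : (Fin d × Fin d) × (Fin d × Fin d), F x * (starRingEnd ℂ) (F x)
          = ∑ t, ∑ s, ((a t : ℂ))⁻¹ * ((a s : ℂ))⁻¹ *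
              ((E t x.1.1 x.2.1 * E s x.2.1 x.1.1) * (E t x.1.2 x.2.2 * E s x.2.2 x.1.2)) := by
        intro x
        rw [hF]
        simp only []
        rw [map_sum, Finset.sum_mul_sum]
        refine Finset.sum_congr rfl fun t _ => Finset.sum_congr rfl fun s _ => ?_
        rw [_root_.map_mul, _root_.map_mul, hconj, hconj]
        have : (starRingEnd ℂ) ((a s : ℂ))⁻¹ = ((a s : ℂ))⁻¹ := by
          simp [Complex.conj_ofReal]
        rw [this]
        ring
      rw [Fintype.sum_congr _ _ expand]
      rw [Finset.sum_comm]
      have swap2 : ∀ t, ∑ x : (Fin d × Fin d) × (Fin d × Fin d),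
          (∑ s, ((a t : ℂ))⁻¹ * ((a s : ℂ))⁻¹ *
            ((E t x.1.1 x.2.1 * E s x.2.1 x.1.1) * (E t x.1.2 x.2.2 * E s x.2.2 x.1.2)))
          = ∑ s, ((r t s : ℂ)) ^ 2 * (((a t : ℂ))⁻¹ * ((a s : ℂ))⁻¹) := by
        intro t
        rw [Finset.sum_comm]
        refine Finset.sum_congr rfl fun s _ => ?_
        have : ∑ x : (Fin d × Fin d) × (Fin d × Fin d),
            ((a t : ℂ))⁻¹ * ((a s : ℂ))⁻¹ *
              ((E t x.1.1 x.2.1 * E s x.2.1 x.1.1) * (E t x.1.2 x.2.2 * E s x.2.2 x.1.2))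
            = ∑ i, ∑ j, ∑ k, ∑ m, (((a t : ℂ))⁻¹ * ((a s : ℂ))⁻¹) *
              ((E t i k * E s k i) * (E t j m * E s m j)) := by
          simp only [Fintype.sum_prod_type]
        rw [this, sum4_factor, htr2 t s]
        ring
      rw [Fintype.sum_congr _ _ swap2]
      push_cast
      refine Finset.sum_congr rfl fun t _ => Finset.sum_congr rfl fun s _ => ?_
      field_simp
    calc ∑ x : (Fin d × Fin d) × (Fin d × Fin d), (Complex.normSq (F x) : ℝ)
        = (∑ x : (Fin d × Fin d) × (Fin d × Fin d), F x * (starRingEnd ℂ) (F x)).re := by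
          rw [Complex.re_sum]
          refine Finset.sum_congr rfl fun x _ => ?_
          rw [Complex.mul_conj, Complex.ofReal_re]
      _ = ∑ t, ∑ s, (r t s) ^ 2 / (a t * a s) := by rw [complexver, Complex.ofReal_re]
  -- Claim C
  have claimC : ∑ x : (Fin d × Fin d) × (Fin d × Fin d), (G x) ^ 2 = (d * (d + 1)) / 2 := by
    rw [Fintype.sum_prod_type]
    have step : ∀ p : Fin d × Fin d, ∑ q : Fin d × Fin d, (G (p, q)) ^ 2
        = if p.1 = p.2 then 1 else 1 / 2 := by
      intro p
      rw [hG]; simp only []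
      by_cases hp : p.1 = p.2
      · have hps : p.swap = p := by
          rw [Prod.ext_iff]; exact ⟨hp.symm ▸ rfl, hp ▸ rfl⟩
        simp only [hps, hp, if_pos]
        have : ∀ q : Fin d × Fin d,
            (((if q = p then (1:ℝ) else 0) + (if q = p then (1:ℝ) else 0)) / 2) ^ 2
            = if q = p then 1 else 0 := by
          intro q; by_cases h' : q = p <;> simp [h'] <;> norm_num
        rw [Fintype.sum_congr _ _ this, Finset.sum_ite_eq']
        simp [hp]
      · have hps : p.swap ≠ p := by
          intro h'
          apply hp
          have := congrArg Prod.fst h'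
          simpa [Prod.swap] using this.symm
        have : ∀ q : Fin d × Fin d,
            (((if q = p then (1:ℝ) else 0) + (if q = p.swap then (1:ℝ) else 0)) / 2) ^ 2
            = ((if q = p then (1:ℝ) else 0) + (if q = p.swap then (1:ℝ) else 0)) / 4 := by
          intro q
          by_cases h1' : q = p
          · have h2' : q ≠ p.swap := fun h => hps (h ▸ h1' ▸ rfl)
            simp [h1', h2', hps, Ne.symm hps]
            norm_num
          · by_cases h2' : q = p.swap <;> simp [h1', h2', hps, Ne.symm hps] <;> norm_num
        rw [Fintype.sum_congr _ _ this]
        rw [← Finset.sum_div, Finset.sum_add_distrib, Finset.sum_ite_eq', Finset.sum_ite_eq']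
        simp [hp]
        norm_num
    rw [Fintype.sum_congr _ _ step]
    rw [Fintype.sum_prod_type]
    have e1 : ∀ i j : Fin d, (if i = j then (1:ℝ) else 1/2) = 1/2 + (if j = i then (1/2:ℝ) else 0) := by
      intro i j
      by_cases h' : i = j
      · simp [h', eq_comm]; norm_num
      · simp [h', Ne.symm h']
    have e2 : ∀ i : Fin d, ∑ j : Fin d, (if i = j then (1:ℝ) else 1/2) = d * (1/2) + 1/2 := by
      intro i
      rw [Fintype.sum_congr _ _ (e1 i), Finset.sum_add_distrib, Finset.sum_ite_eq',
        Finset.sum_const, Finset.card_univ, Fintype.card_fin]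
      simp
    rw [Fintype.sum_congr _ _ e2, Finset.sum_const, Finset.card_univ, Fintype.card_fin]
    simp only [nsmul_eq_mul]
    ring
  -- assemble via Cauchy-Schwarz
  have hd0 : (0:ℝ) < d := by exact_mod_cast Nat.lt_of_lt_of_le Nat.zero_lt_one hd
  have habs : (d:ℝ) ≤ ∑ x : (Fin d × Fin d) × (Fin d × Fin d), ‖F x‖ * G x := by
    have h0 : ‖∑ x : (Fin d × Fin d) × (Fin d × Fin d), F x * (G x : ℂ)‖ = d := by
      rw [claimA]; simp
    calc (d:ℝ) = ‖∑ x : (Fin d × Fin d) × (Fin d × Fin d), F x * (G x : ℂ)‖ := h0.symm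
      _ ≤ ∑ x : (Fin d × Fin d) × (Fin d × Fin d), ‖F x * (G x : ℂ)‖ :=
          norm_sum_le _ _
      _ = ∑ x : (Fin d × Fin d) × (Fin d × Fin d), ‖F x‖ * G x := by
          refine Finset.sum_congr rfl fun x _ => ?_
          rw [norm_mul, Complex.norm_real, Real.norm_eq_abs, abs_of_nonneg (hGnn x)]
  have hcs := Finset.sum_mul_sq_le_sq_mul_sq Finset.univ
    (fun x : (Fin d × Fin d) × (Fin d × Fin d) => ‖F x‖) G
  have hFsq : ∑ x : (Fin d × Fin d) × (Fin d × Fin d), ‖F x‖ ^ 2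
      = ∑ t, ∑ s, (r t s) ^ 2 / (a t * a s) := by
    rw [← claimB]
    exact Finset.sum_congr rfl fun x _ => Complex.sq_norm (F x)
  rw [hFsq, claimC] at hcs
  have hsum_nonneg : (0:ℝ) ≤ ∑ x : (Fin d × Fin d) × (Fin d × Fin d), ‖F x‖ * G x :=
    Finset.sum_nonneg fun x _ => mul_nonneg (norm_nonneg _) (hGnn x)
  have hd2 : (d:ℝ) ^ 2 ≤ (∑ t, ∑ s, (r t s) ^ 2 / (a t * a s)) * ((d : ℝ) * ((d : ℝ) + 1) / 2) := by
    calc (d:ℝ) ^ 2 ≤ (∑ x : (Fin d × Fin d) × (Fin d × Fin d), ‖F x‖ * G x) ^ 2 :=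
          pow_le_pow_left₀ hd0.le habs 2
      _ ≤ _ := hcs
  rw [div_le_iff₀ (by linarith : (0:ℝ) < (d:ℝ) + 1)]
  nlinarith [hd2, hd0]


/-- For `d ≥ 2` and a rank-one minimal informationally complete POVM
`{E_i}_{i=1}^{d²}` on `ℂ^d` (a POVM with `n = d²` effects, each nonzero of rank one), the
disturbance `D = Σ_{l,m} (tr(√E_l √E_m))² − 2 Σ_l (tr √E_l)² + d²` equals the orthogonality
`O = Σ_{i,j} (tr(√E_i √E_j))² − 2d + d²`, and `D ≥ d²(d−1)/(d+1)`. -/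
theorem rank_one_mic_disturbance_eq_orthogonality
    (d : ℕ) (hd : 2 ≤ d)
    (E : Fin (d ^ 2) → Matrix (Fin d) (Fin d) ℂ)
    (hE : ∀ i, (E i).PosSemidef)
    (hsum : ∑ i, E i = 1)
    (hrank : ∀ i, (E i).rank = 1)
    (D O : ℝ)
    (hD : D = ∑ l, ∑ m, (((hE l).sqrt * (hE m).sqrt).trace.re) ^ 2
        - 2 * ∑ l, (((hE l).sqrt).trace.re) ^ 2 + (d : ℝ) ^ 2)
    (hO : O = ∑ i, ∑ j, (((hE i).sqrt * (hE j).sqrt).trace.re) ^ 2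
        - 2 * (d : ℝ) + (d : ℝ) ^ 2) :
    D = O ∧ (d : ℝ) ^ 2 * ((d : ℝ) - 1) / ((d : ℝ) + 1) ≤ D := by
  choose a ha htr hsq using fun t => rankOneAux d (E t) (hE t) (hrank t)
  choose r hrnn hr using fun t s => tracePSD d (E t) (E s) (hE t) (hE s)
  have hsqrt : ∀ t, (hE t).sqrt = (((Real.sqrt (a t))⁻¹ : ℝ) : ℂ) • E t :=
    fun t => sqrtEq d (E t) (hE t) (a t) (ha t) (hsq t)
  have hsuma : ∑ t, a t = (d : ℝ) := by
    have h1 : (∑ t, E t).trace = (d : ℂ) := by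
      rw [hsum, Matrix.trace_one]
      simp
    rw [Matrix.trace_sum] at h1
    have h2 : ∑ t, ((a t : ℝ) : ℂ) = (d : ℂ) := by
      rw [← h1]
      exact Finset.sum_congr rfl fun t _ => (htr t).symm
    exact_mod_cast h2
  -- trace of products of square roots
  have htrmul : ∀ l m, ((hE l).sqrt * (hE m).sqrt).trace.re
      = (Real.sqrt (a l))⁻¹ * (Real.sqrt (a m))⁻¹ * r l m := by
    intro l m
    rw [hsqrt l, hsqrt m, Matrix.smul_mul, Matrix.mul_smul, smul_smul, Matrix.trace_smul,
      hr l m, smul_eq_mul]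
    push_cast
    simp [Complex.ofReal_mul]
  -- trace of a single square root
  have htrsqrt : ∀ l, ((hE l).sqrt).trace.re = Real.sqrt (a l) := by
    intro l
    rw [hsqrt l, Matrix.trace_smul, htr l, smul_eq_mul]
    rw [← Complex.ofReal_mul, Complex.ofReal_re, inv_mul_eq_div, Real.div_sqrt]
  -- sums of squares
  have hsq1 : ∑ l, (((hE l).sqrt).trace.re) ^ 2 = (d : ℝ) := by
    rw [← hsuma]
    refine Finset.sum_congr rfl fun l _ => ?_
    rw [htrsqrt l, Real.sq_sqrt (ha l).le]
  have hsq2 : ∑ l, ∑ m, (((hE l).sqrt * (hE m).sqrt).trace.re) ^ 2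
      = ∑ l, ∑ m, (r l m) ^ 2 / (a l * a m) := by
    refine Finset.sum_congr rfl fun l _ => Finset.sum_congr rfl fun m _ => ?_
    rw [htrmul l m]
    rw [mul_pow, mul_pow, ← Real.sqrt_inv, ← Real.sqrt_inv, Real.sq_sqrt (inv_nonneg.mpr (ha l).le),
      Real.sq_sqrt (inv_nonneg.mpr (ha m).le)]
    field_simp
  have hd1 : 1 ≤ d := le_trans (by norm_num) hd
  have hkey := keyIneq d hd1 (d ^ 2) E (fun t => (hE t).1) a ha htr hsq hsuma r hr
  rw [← hsq2] at hkey
  have hd0 : (0:ℝ) < d := by exact_mod_cast Nat.lt_of_lt_of_le Nat.zero_lt_one hd1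
  constructor
  · rw [hD, hO, hsq1]
  · rw [hD, hsq1]
    have harith : (d : ℝ) ^ 2 * ((d : ℝ) - 1) / ((d : ℝ) + 1)
        = 2 * (d:ℝ) / ((d:ℝ) + 1) - 2 * (d:ℝ) + (d:ℝ) ^ 2 := by
      field_simp
      ring
    rw [harith]
    have := hkey
    linarith
end
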